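/- arXiv:1203.4533 — 4 statements merged into one kernel-verified Lean document; each statement's English description precedes it below -/
import Mathlib

section
/- Let V be a topological space equipped with a Borel measure μ that assigns positive measure to every nonempty open set, and let P : ℝ × V → V be a continuous flow (P(0, x) = x and P(s + t, x) = P(s, P(t, x)) for all s, t ∈ ℝ, x ∈ V) such that each map x ↦ P(t, x) preserves the measure μ. Let W ⊆ V be a subset with μ(W) < ∞, W ⊆ closure(interior(W)), and P(t, ·)(W) ⊆ W for every t > 0. Then every point p ∈ W is Poisson stable for the flow P: for every t > 0 and every open neighborhood U of p there exist a point q ∈ U and a time t' > t such that P(t', q) ∈ U. -/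
open MeasureTheory Topology

/-- **Poincaré recurrence / Poisson stability** (Theorem 1 of the paper).
If `P` is a continuous measure-preserving flow on `V`, `μ` assigns positive
measure to every nonempty open set, and `W` is a forward-invariant set of
finite measure with `W ⊆ closure (interior W)`, then every point of `W`
is Poisson stable for the flow. -/
theorem poisson_stability_of_invariant_finite_volume
    {V : Type*} [TopologicalSpace V] [MeasurableSpace V] [BorelSpace V]
    (μ : Measure V)
    (hμpos : ∀ U : Set V, IsOpen U → U.Nonempty → 0 < μ U)
    (P : ℝ → V → V)
    (hPcont : Continuous fun q : ℝ × V => P q.1 q.2)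
    (hP0 : ∀ x, P 0 x = x)
    (hPadd : ∀ s t : ℝ, ∀ x, P (s + t) x = P s (P t x))
    (hPmeas : ∀ t : ℝ, Measure.map (P t) μ = μ)
    (W : Set V)
    (hWfin : μ W < ⊤)
    (hWreg : W ⊆ closure (interior W))
    (hWinv : ∀ t : ℝ, 0 < t → P t '' W ⊆ W) :
    ∀ p ∈ W, ∀ t : ℝ, 0 < t → ∀ U : Set V, IsOpen U → p ∈ U →
      ∃ q ∈ U, ∃ t' : ℝ, t < t' ∧ P t' q ∈ U := by
  intro p hp t ht U hU hpU
  by_contra hcon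
  push_neg at hcon
  set A : Set V := U ∩ interior W with hA
  have hAopen : IsOpen A := hU.inter isOpen_interior
  have hAne : A.Nonempty := by
    rcases (mem_closure_iff.1 (hWreg hp)) U hU hpU with ⟨x, hxU, hxI⟩
    exact ⟨x, hxU, hxI⟩
  have hAmeas : MeasurableSet A := hAopen.measurableSet
  have hAW : A ⊆ W := fun x hx => interior_subset hx.2
  have hAU : A ⊆ U := fun x hx => hx.1
  have hApos : 0 < μ A := hμpos A hAopen hAne
  set c : ℝ := 2 * t with hc
  have hcpos : 0 < c := by positivity
  have hPc : ∀ s : ℝ, Continuous (P s) := fun s =>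
    hPcont.comp (Continuous.prodMk_right s)
  have hinv : ∀ s : ℝ, ∀ x, P s (P (-s) x) = x := fun s x => by
    rw [← hPadd, add_neg_cancel, hP0]
  set B : ℕ → Set V := fun n => (P (-(c * (n + 1)))) ⁻¹' A with hB
  have hBmeas : ∀ n, MeasurableSet (B n) := fun n =>
    (hPc _).measurable hAmeas
  have hBμ : ∀ n, μ (B n) = μ A := fun n => by
    rw [hB, ← Measure.map_apply (hPc _).measurable hAmeas,
      hPmeas (-(c * (n + 1)))]
  have hBW : ∀ n, B n ⊆ W := by
    intro n x hx
    have h1 : P (-(c * (n + 1))) x ∈ W := hAW hx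
    have h2 : P (c * (n + 1)) (P (-(c * (n + 1))) x) = x := hinv _ x
    have hmem : x ∈ P (c * (n + 1)) '' W := ⟨_, h1, h2⟩
    have hpos : (0:ℝ) < c * (n + 1) := by positivity
    exact hWinv _ hpos hmem
  have key : ∀ m n : ℕ, m < n → Disjoint (B m) (B n) := by
    intro m n hlt
    rw [Set.disjoint_left]
    intro x hxm hxn
    have hq : P (-(c * (n + 1))) x ∈ A := hxn
    refine hcon (P (-(c * (n + 1))) x) (hAU hq) (c * ((n : ℝ) - m)) ?_ ?_
    · have h1 : (1:ℝ) ≤ (n:ℝ) - m := by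
        have : (m:ℝ) + 1 ≤ n := by exact_mod_cast hlt
        linarith
      have : c * 1 ≤ c * ((n:ℝ) - m) := by nlinarith
      simp only [hc] at *
      linarith
    · have heq : P (c * ((n:ℝ) - m)) (P (-(c * (n + 1))) x)
          = P (-(c * (m + 1))) x := by
        rw [← hPadd]; congr 1; ring
      rw [heq]
      exact hAU hxm
  have hdisj : Pairwise (Function.onFun Disjoint B) := by
    intro m n hmn
    rcases hmn.lt_or_gt with h | h
    · exact key m n h
    · exact (key n m h).symm
  have hUn : μ (⋃ n, B n) = ∑' n, μ (B n) := measure_iUnion hdisj hBmeas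
  have hle : μ (⋃ n, B n) ≤ μ W := measure_mono (Set.iUnion_subset hBW)
  rw [hUn] at hle
  simp only [hBμ] at hle
  have htop : ∑' _ : ℕ, μ A = ⊤ :=
    ENNReal.tsum_const_eq_top_of_ne_zero hApos.ne'
  rw [htop, top_le_iff] at hle
  exact hWfin.ne hle
end

section
/- Fix real parameters m₁, m₂, r₁, r₂ > 0 satisfying m₁ (r₂² − r₁ (r₁ + r₂)) ≠ m₂ r₁ (r₁ + r₂), m₁ (r₂² − r₁ (r₁ − r₂)) ≠ m₂ r₁ (r₁ − r₂), and m₁ r₁² ≠ m₂ (r₂² − r₁²). Then for every θ = (θ₁, θ₂) ∈ ℝ², the functions b₁(θ) = m₂ r₂ (r₁ m₂ cos(θ₁ − θ₂) − r₂ m₁) and b₂(θ) = m₂ r₁ (r₂ m₁ cos(θ₁ − θ₂) − r₁ (m₁ + m₂)) are not simultaneously zero: (b₁(θ), b₂(θ)) ≠ (0, 0). -/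
/-! Writing `c = cos (θ₁ - θ₂)`, the equations `b₁ = 0` and `b₂ = 0` say `r₁ m₂ c = r₂ m₁` and
`r₂ m₁ c = r₁ (m₁ + m₂)`. Chaining them gives `r₁ m₂ c² = r₁ (m₁ + m₂)`, which is impossible
because `c² ≤ 1` and `m₁ > 0`. -/

theorem eq_of_mul_sub_eq_zero {R : Type*} [NonUnitalNonAssocRing R] [NoZeroDivisors R]
    {k x y : R} (hk : k ≠ 0) (h : k * (x - y) = 0) : x = y :=
  sub_eq_zero.mp ((mul_eq_zero.mp h).resolve_left hk)

theorem mul_sq_eq_of_mul_eq_of_mul_eq {M : Type*} [Monoid M] {a b c d : M}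
    (h₁ : a * c = b) (h₂ : b * c = d) : a * c ^ 2 = d := by
  rw [sq, ← mul_assoc, h₁, h₂]

theorem b_not_simultaneously_zero_general
    (m₁ m₂ r₁ r₂ : ℝ) (hm₁ : 0 < m₁) (hm₂ : 0 < m₂)
    (hr₁ : 0 < r₁) (hr₂ : 0 < r₂) :
    ∀ θ₁ θ₂ : ℝ,
      (m₂ * r₂ * (r₁ * m₂ * Real.cos (θ₁ - θ₂) - r₂ * m₁),
       m₂ * r₁ * (r₂ * m₁ * Real.cos (θ₁ - θ₂) - r₁ * (m₁ + m₂)))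
        ≠ ((0 : ℝ), (0 : ℝ)) := by
  intro θ₁ θ₂ h
  obtain ⟨hb₁, hb₂⟩ := Prod.mk.inj h
  have h₁ : r₁ * m₂ * Real.cos (θ₁ - θ₂) = r₂ * m₁ :=
    eq_of_mul_sub_eq_zero (by positivity) hb₁
  have h₂ : r₂ * m₁ * Real.cos (θ₁ - θ₂) = r₁ * (m₁ + m₂) :=
    eq_of_mul_sub_eq_zero (by positivity) hb₂
  have hlt : r₁ * m₂ * Real.cos (θ₁ - θ₂) ^ 2 < r₁ * (m₁ + m₂) :=
    calc r₁ * m₂ * Real.cos (θ₁ - θ₂) ^ 2 ≤ r₁ * m₂ :=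
          mul_le_of_le_one_right (by positivity) (Real.cos_sq_le_one _)
      _ < r₁ * (m₁ + m₂) := mul_lt_mul_of_pos_left (by linarith) hr₁
  exact hlt.ne (mul_sq_eq_of_mul_eq_of_mul_eq h₁ h₂)

/-- Under the stated genericity conditions on the masses and lengths, the
components `b₁(θ)` and `b₂(θ)` of the control vector field of the double
pendulum on a cart never vanish simultaneously. -/
theorem b_not_simultaneously_zero
    (m₁ m₂ r₁ r₂ : ℝ) (hm₁ : 0 < m₁) (hm₂ : 0 < m₂)
    (hr₁ : 0 < r₁) (hr₂ : 0 < r₂)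
    (h1 : m₁ * (r₂ ^ 2 - r₁ * (r₁ + r₂)) ≠ m₂ * r₁ * (r₁ + r₂))
    (h2 : m₁ * (r₂ ^ 2 - r₁ * (r₁ - r₂)) ≠ m₂ * r₁ * (r₁ - r₂))
    (h3 : m₁ * r₁ ^ 2 ≠ m₂ * (r₂ ^ 2 - r₁ ^ 2)) :
    ∀ θ₁ θ₂ : ℝ,
      (m₂ * r₂ * (r₁ * m₂ * Real.cos (θ₁ - θ₂) - r₂ * m₁),
       m₂ * r₁ * (r₂ * m₁ * Real.cos (θ₁ - θ₂) - r₁ * (m₁ + m₂)))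
        ≠ ((0 : ℝ), (0 : ℝ)) :=
  b_not_simultaneously_zero_general m₁ m₂ r₁ r₂ hm₁ hm₂ hr₁ hr₂
end

section
/- Fix real parameters m₁, m₂, r₁, r₂, g > 0. Let X₃ = [X₁, X₂] and X₄ = [X₂, X₃]. Then for every z = (θ₁, θ₂, ω₁, ω₂) ∈ ℝ⁴, the first two components of X₄(z) vanish: (X₄(z))₁ = (X₄(z))₂ = 0. -/
noncomputable section

/-- `Δ(θ) = r₁ r₂ (m₁ + m₂ sin²(θ₁ − θ₂))`. -/
def Δpend (m₁ m₂ r₁ r₂ : ℝ) (z : Fin 4 → ℝ) : ℝ :=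
  r₁ * r₂ * (m₁ + m₂ * Real.sin (z 0 - z 1) ^ 2)

def b₁pend (m₁ m₂ r₁ r₂ : ℝ) (z : Fin 4 → ℝ) : ℝ :=
  m₂ * r₂ * (r₁ * m₂ * Real.cos (z 0 - z 1) - r₂ * m₁)

def b₂pend (m₁ m₂ r₁ r₂ : ℝ) (z : Fin 4 → ℝ) : ℝ :=
  m₂ * r₁ * (r₂ * m₁ * Real.cos (z 0 - z 1) - r₁ * (m₁ + m₂))

def a₁pend (m₁ m₂ r₁ r₂ g : ℝ) (z : Fin 4 → ℝ) : ℝ :=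
  -g * r₂ * (m₂ * Real.sin (z 1) * Real.cos (z 0 - z 1)
      - (m₁ + m₂) * Real.sin (z 0))
  - m₂ * r₂ * Real.sin (z 0 - z 1) *
      (r₁ * Real.cos (z 0 - z 1) * (z 2) ^ 2 + r₂ * (z 3) ^ 2)

def a₂pend (m₁ m₂ r₁ r₂ g : ℝ) (z : Fin 4 → ℝ) : ℝ :=
  -g * r₁ * (m₁ + m₂) * (Real.cos (z 0 - z 1) * Real.sin (z 0) - Real.sin (z 1))
  + r₁ * Real.sin (z 0 - z 1) *
      (r₁ * (m₁ + m₂) * (z 2) ^ 2 + r₂ * m₂ * Real.cos (z 0 - z 1) * (z 3) ^ 2)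

/-- The drift-type vector field `X₁(z) = (Δ(θ) ω₁, Δ(θ) ω₂, a₁(z), a₂(z))`. -/
def X₁pend (m₁ m₂ r₁ r₂ g : ℝ) : (Fin 4 → ℝ) → (Fin 4 → ℝ) :=
  fun z => ![Δpend m₁ m₂ r₁ r₂ z * z 2, Δpend m₁ m₂ r₁ r₂ z * z 3,
    a₁pend m₁ m₂ r₁ r₂ g z, a₂pend m₁ m₂ r₁ r₂ g z]

/-- The control-type vector field `X₂(z) = (0, 0, b₁(θ), b₂(θ))`. -/
def X₂pend (m₁ m₂ r₁ r₂ : ℝ) : (Fin 4 → ℝ) → (Fin 4 → ℝ) :=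
  fun z => ![0, 0, b₁pend m₁ m₂ r₁ r₂ z, b₂pend m₁ m₂ r₁ r₂ z]

/-- The Lie bracket `[X, Y](z) = DY(z)·X(z) − DX(z)·Y(z)` of vector fields. -/
def lieBracket (X Y : (Fin 4 → ℝ) → (Fin 4 → ℝ)) : (Fin 4 → ℝ) → (Fin 4 → ℝ) :=
  fun z => fderiv ℝ Y z (X z) - fderiv ℝ X z (Y z)

/-- `X₃ = [X₁, X₂]`. -/
def X₃pend (m₁ m₂ r₁ r₂ g : ℝ) : (Fin 4 → ℝ) → (Fin 4 → ℝ) :=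
  lieBracket (X₁pend m₁ m₂ r₁ r₂ g) (X₂pend m₁ m₂ r₁ r₂)

/-- `X₄ = [X₂, X₃]`. -/
def X₄pend (m₁ m₂ r₁ r₂ g : ℝ) : (Fin 4 → ℝ) → (Fin 4 → ℝ) :=
  lieBracket (X₂pend m₁ m₂ r₁ r₂) (X₃pend m₁ m₂ r₁ r₂ g)

/-- The family `F = {X₁, X₂, X₃, X₄}`. -/
def Fpend (m₁ m₂ r₁ r₂ g : ℝ) : Set ((Fin 4 → ℝ) → (Fin 4 → ℝ)) :=
  {X₁pend m₁ m₂ r₁ r₂ g, X₂pend m₁ m₂ r₁ r₂,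
   X₃pend m₁ m₂ r₁ r₂ g, X₄pend m₁ m₂ r₁ r₂ g}

/-- Iterated Lie brackets `[Y₁,[…[Y_{k−1}, Y_k]…]]` of members of `F`
(including the members of `F` themselves). -/
inductive IterBracket (F : Set ((Fin 4 → ℝ) → (Fin 4 → ℝ))) :
    ((Fin 4 → ℝ) → (Fin 4 → ℝ)) → Prop
  | base {X} : X ∈ F → IterBracket F X
  | bracket {X Y} : X ∈ F → IterBracket F Y → IterBracket F (lieBracket X Y)

/-- `F` is bracket-generating on `ℝ⁴`. -/
def BracketGenerating (F : Set ((Fin 4 → ℝ) → (Fin 4 → ℝ))) : Prop :=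
  ∀ z : Fin 4 → ℝ,
    Submodule.span ℝ {v : Fin 4 → ℝ | ∃ B, IterBracket F B ∧ v = B z} = ⊤

end

/-! The field `X₂` is vertical (its `θ`-components vanish) and depends on `θ` only, through
`θ₁ − θ₂`. Hence the `θ`-components of `X₃ = [X₁, X₂]` come only from the rows `Δ(θ) ω` of `X₁`
and equal `−Δ b₁`, `−Δ b₂`, which are again functions of `θ₁ − θ₂` alone. A function that is
constant along a vertical direction has zero derivative in that direction, so both terms of
`[X₂, X₃](z) = DX₃(z) X₂(z) − DX₂(z) X₃(z)` have vanishing `θ`-components. -/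

section LineInvariance

variable {𝕜 E F : Type*} [NontriviallyNormedField 𝕜] [NormedAddCommGroup E] [NormedSpace 𝕜 E]
  [NormedAddCommGroup F] [NormedSpace 𝕜 F] {x v : E}

theorem fderiv_apply_eq_zero_of_forall_add_smul {f : E → F} (h : ∀ t : 𝕜, f (x + t • v) = f x) :
    fderiv 𝕜 f x v = 0 := by
  by_cases hf : DifferentiableAt 𝕜 f x
  · simp [← hf.lineDeriv_eq_fderiv, lineDeriv, h]
  · simp [fderiv_zero_of_not_differentiableAt hf]

variable {ι : Type*} {f : E → ι → F}

theorem fderiv_apply_apply (hf : DifferentiableAt 𝕜 f x) (v : E) (i : ι) :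
    fderiv 𝕜 f x v i = fderiv 𝕜 (fun y => f y i) x v := by
  rw [fderiv_apply hf]
  rfl

theorem fderiv_apply_apply_eq_zero_of_forall_add_smul {i : ι}
    (h : ∀ t : 𝕜, f (x + t • v) i = f x i) : fderiv 𝕜 f x v i = 0 := by
  by_cases hf : DifferentiableAt 𝕜 f x
  · rw [fderiv_apply_apply hf]
    exact fderiv_apply_eq_zero_of_forall_add_smul h
  · simp [fderiv_zero_of_not_differentiableAt hf]

end LineInvariance

def IsVertical (v : Fin 4 → ℝ) : Prop := v 0 = 0 ∧ v 1 = 0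

namespace IsVertical

variable {v w : Fin 4 → ℝ}

theorem sub (hv : IsVertical v) (hw : IsVertical w) : IsVertical (v - w) := by
  simp [IsVertical, hv.1, hv.2, hw.1, hw.2]

theorem add_smul_apply_sub (hv : IsVertical v) (z : Fin 4 → ℝ) (t : ℝ) :
    (z + t • v) 0 - (z + t • v) 1 = z 0 - z 1 := by
  simp [hv.1, hv.2]

end IsVertical

section DoublePendulum

variable (m₁ m₂ r₁ r₂ g : ℝ) {z v : Fin 4 → ℝ}

theorem Δpend_add_smul (hv : IsVertical v) (t : ℝ) :
    Δpend m₁ m₂ r₁ r₂ (z + t • v) = Δpend m₁ m₂ r₁ r₂ z := by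
  rw [Δpend, Δpend, hv.add_smul_apply_sub]

theorem b₁pend_add_smul (hv : IsVertical v) (t : ℝ) :
    b₁pend m₁ m₂ r₁ r₂ (z + t • v) = b₁pend m₁ m₂ r₁ r₂ z := by
  rw [b₁pend, b₁pend, hv.add_smul_apply_sub]

theorem b₂pend_add_smul (hv : IsVertical v) (t : ℝ) :
    b₂pend m₁ m₂ r₁ r₂ (z + t • v) = b₂pend m₁ m₂ r₁ r₂ z := by
  rw [b₂pend, b₂pend, hv.add_smul_apply_sub]

theorem isVertical_X₂pend (z : Fin 4 → ℝ) : IsVertical (X₂pend m₁ m₂ r₁ r₂ z) :=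
  ⟨rfl, rfl⟩

theorem isVertical_fderiv_X₂pend (z v : Fin 4 → ℝ) :
    IsVertical (fderiv ℝ (X₂pend m₁ m₂ r₁ r₂) z v) :=
  ⟨fderiv_apply_apply_eq_zero_of_forall_add_smul fun _ => rfl,
    fderiv_apply_apply_eq_zero_of_forall_add_smul fun _ => rfl⟩

theorem fderiv_Δpend_mul_apply (hv : IsVertical v) (j : Fin 4) :
    fderiv ℝ (fun y => Δpend m₁ m₂ r₁ r₂ y * y j) z v = Δpend m₁ m₂ r₁ r₂ z * v j := by
  have hΔ : DifferentiableAt ℝ (Δpend m₁ m₂ r₁ r₂) z := by unfold Δpend; fun_prop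
  rw [fderiv_fun_mul hΔ (differentiableAt_apply j z), (hasFDerivAt_apply j z).fderiv]
  simp [fderiv_apply_eq_zero_of_forall_add_smul (Δpend_add_smul m₁ m₂ r₁ r₂ hv)]

theorem differentiable_X₁pend : Differentiable ℝ (X₁pend m₁ m₂ r₁ r₂ g) := by
  refine differentiable_pi.2 fun i => ?_
  fin_cases i <;>
    simp only [X₁pend, Δpend, a₁pend, a₂pend, Fin.zero_eta, Fin.mk_one, Fin.reduceFinMk,
      Matrix.cons_val_zero, Matrix.cons_val_one, Matrix.cons_val] <;>
    fun_prop

theorem fderiv_X₁pend_apply (hv : IsVertical v) :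
    fderiv ℝ (X₁pend m₁ m₂ r₁ r₂ g) z v 0 = Δpend m₁ m₂ r₁ r₂ z * v 2 ∧
      fderiv ℝ (X₁pend m₁ m₂ r₁ r₂ g) z v 1 = Δpend m₁ m₂ r₁ r₂ z * v 3 :=
  ⟨(fderiv_apply_apply (differentiable_X₁pend m₁ m₂ r₁ r₂ g z) v 0).trans
      (fderiv_Δpend_mul_apply m₁ m₂ r₁ r₂ hv 2),
    (fderiv_apply_apply (differentiable_X₁pend m₁ m₂ r₁ r₂ g z) v 1).trans
      (fderiv_Δpend_mul_apply m₁ m₂ r₁ r₂ hv 3)⟩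

theorem X₃pend_apply (z : Fin 4 → ℝ) :
    X₃pend m₁ m₂ r₁ r₂ g z 0 = -(Δpend m₁ m₂ r₁ r₂ z * b₁pend m₁ m₂ r₁ r₂ z) ∧
      X₃pend m₁ m₂ r₁ r₂ g z 1 = -(Δpend m₁ m₂ r₁ r₂ z * b₂pend m₁ m₂ r₁ r₂ z) := by
  obtain ⟨h₀, h₁⟩ := isVertical_fderiv_X₂pend m₁ m₂ r₁ r₂ z (X₁pend m₁ m₂ r₁ r₂ g z)
  obtain ⟨k₀, k₁⟩ := fderiv_X₁pend_apply m₁ m₂ r₁ r₂ g (z := z) (isVertical_X₂pend m₁ m₂ r₁ r₂ z)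
  simp only [X₃pend, lieBracket, Pi.sub_apply, h₀, h₁, k₀, k₁, zero_sub]
  exact ⟨rfl, rfl⟩

theorem isVertical_fderiv_X₃pend (hv : IsVertical v) :
    IsVertical (fderiv ℝ (X₃pend m₁ m₂ r₁ r₂ g) z v) := by
  constructor <;> refine fderiv_apply_apply_eq_zero_of_forall_add_smul fun t => ?_ <;>
    simp only [X₃pend_apply, Δpend_add_smul m₁ m₂ r₁ r₂ hv, b₁pend_add_smul m₁ m₂ r₁ r₂ hv,
      b₂pend_add_smul m₁ m₂ r₁ r₂ hv]

end DoublePendulum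

theorem X₄_first_components_vanish_general
    (m₁ m₂ r₁ r₂ g : ℝ) :
    ∀ z : Fin 4 → ℝ,
      X₄pend m₁ m₂ r₁ r₂ g z 0 = 0 ∧ X₄pend m₁ m₂ r₁ r₂ g z 1 = 0 := fun z =>
  (isVertical_fderiv_X₃pend m₁ m₂ r₁ r₂ g (isVertical_X₂pend m₁ m₂ r₁ r₂ z)).sub
    (isVertical_fderiv_X₂pend m₁ m₂ r₁ r₂ z _)

/-- The first two components of `X₄ = [X₂, X₃]` vanish identically. -/
theorem X₄_first_components_vanish
    (m₁ m₂ r₁ r₂ g : ℝ) (hm₁ : 0 < m₁) (hm₂ : 0 < m₂)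
    (hr₁ : 0 < r₁) (hr₂ : 0 < r₂) (hg : 0 < g) :
    ∀ z : Fin 4 → ℝ,
      X₄pend m₁ m₂ r₁ r₂ g z 0 = 0 ∧ X₄pend m₁ m₂ r₁ r₂ g z 1 = 0 :=
  X₄_first_components_vanish_general m₁ m₂ r₁ r₂ g
end

section
/- Fix real parameters m₁, m₂, r₁, r₂, g > 0. Let z = (θ, ω) : ℝ → ℝ⁴ be a differentiable curve satisfying the uncontrolled system ż(t) = f(z(t)) for all t ∈ ℝ, where f(z) = (ω₁, ω₂, a₁(z)/Δ(θ), a₂(z)/Δ(θ)). Then the total energy E(z(t)) = T(θ(t), ω(t)) + U(θ(t)) is constant in t, where T(θ, ω) = ½ (m₁ + m₂) r₁² ω₁² + m₂ r₁ r₂ ω₁ ω₂ cos(θ₁ − θ₂) + ½ m₂ r₂² ω₂² and U(θ) = g ((m₁ + m₂) r₁ cos θ₁ + m₂ r₂ cos θ₂). -/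
noncomputable section

/-- The drift vector field `f(z) = (ω₁, ω₂, a₁(z)/Δ(θ), a₂(z)/Δ(θ))`. -/
def fpend (m₁ m₂ r₁ r₂ g : ℝ) : (Fin 4 → ℝ) → (Fin 4 → ℝ) :=
  fun z => ![z 2, z 3,
    a₁pend m₁ m₂ r₁ r₂ g z / Δpend m₁ m₂ r₁ r₂ z,
    a₂pend m₁ m₂ r₁ r₂ g z / Δpend m₁ m₂ r₁ r₂ z]

/-- Kinetic energy. -/
def Tpend (m₁ m₂ r₁ r₂ : ℝ) (z : Fin 4 → ℝ) : ℝ :=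
  (1 / 2) * (m₁ + m₂) * r₁ ^ 2 * (z 2) ^ 2
    + m₂ * r₁ * r₂ * z 2 * z 3 * Real.cos (z 0 - z 1)
    + (1 / 2) * m₂ * r₂ ^ 2 * (z 3) ^ 2

/-- Potential energy. -/
def Upend (m₁ m₂ r₁ r₂ g : ℝ) (z : Fin 4 → ℝ) : ℝ :=
  g * ((m₁ + m₂) * r₁ * Real.cos (z 0) + m₂ * r₂ * Real.cos (z 1))

end

/-!
Write `T = ½ ωᵀ M(θ) ω` with the mass matrix
`M(θ) = [[(m₁ + m₂) r₁², m₂ r₁ r₂ cos(θ₁ − θ₂)], [m₂ r₁ r₂ cos(θ₁ − θ₂), m₂ r₂²]]`.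
Since `Δ ≠ 0`, the equations `ω̇ = a / Δ` are Lagrange's equations `M(θ) ω̇ = Q(θ, ω)`, so along a
solution `d(T + U)/dt = ωᵀ Q + ½ ωᵀ Ṁ ω − ∇U · ω`: the velocity-dependent part of `Q` cancels
`½ ωᵀ Ṁ ω` and its gravitational part cancels `∇U · ω`.
-/

section EnergyConservation

variable {m₁ m₂ r₁ r₂ g : ℝ}

theorem Δpend_pos (hm₁ : 0 < m₁) (hm₂ : 0 ≤ m₂) (hr₁ : 0 < r₁) (hr₂ : 0 < r₂)
    (z : Fin 4 → ℝ) : 0 < Δpend m₁ m₂ r₁ r₂ z := by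
  unfold Δpend
  positivity

theorem fpend_lagrange_fst (z : Fin 4 → ℝ) (hΔ : Δpend m₁ m₂ r₁ r₂ z ≠ 0) :
    (m₁ + m₂) * r₁ ^ 2 * fpend m₁ m₂ r₁ r₂ g z 2
        + m₂ * r₁ * r₂ * Real.cos (z 0 - z 1) * fpend m₁ m₂ r₁ r₂ g z 3
      = r₁ * ((m₁ + m₂) * g * Real.sin (z 0) - m₂ * r₂ * Real.sin (z 0 - z 1) * z 3 ^ 2) := by
  simp only [fpend, Matrix.cons_val]
  field_simp
  simp only [a₁pend, a₂pend, Δpend]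
  linear_combination (-(m₁ + m₂) * r₁ ^ 2 * r₂ * g * Real.sin (z 0) * m₂
    + m₂ ^ 2 * r₁ ^ 2 * r₂ ^ 2 * Real.sin (z 0 - z 1) * z 3 ^ 2) * Real.sin_sq_add_cos_sq (z 0 - z 1)

theorem fpend_lagrange_snd (z : Fin 4 → ℝ) (hΔ : Δpend m₁ m₂ r₁ r₂ z ≠ 0) :
    m₂ * r₁ * r₂ * Real.cos (z 0 - z 1) * fpend m₁ m₂ r₁ r₂ g z 2
        + m₂ * r₂ ^ 2 * fpend m₁ m₂ r₁ r₂ g z 3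
      = m₂ * r₂ * (g * Real.sin (z 1) + r₁ * Real.sin (z 0 - z 1) * z 2 ^ 2) := by
  simp only [fpend, Matrix.cons_val]
  field_simp
  simp only [a₁pend, a₂pend, Δpend]
  linear_combination (-m₂ ^ 2 * r₁ * r₂ ^ 2 * g * Real.sin (z 1)
    - m₂ ^ 2 * r₁ ^ 2 * r₂ ^ 2 * Real.sin (z 0 - z 1) * z 2 ^ 2) * Real.sin_sq_add_cos_sq (z 0 - z 1)

noncomputable def energyRate (m₁ m₂ r₁ r₂ g : ℝ) (z v : Fin 4 → ℝ) : ℝ :=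
  (m₁ + m₂) * r₁ ^ 2 * z 2 * v 2
    + m₂ * r₁ * r₂ * ((v 2 * z 3 + z 2 * v 3) * Real.cos (z 0 - z 1)
      - z 2 * z 3 * Real.sin (z 0 - z 1) * (v 0 - v 1))
    + m₂ * r₂ ^ 2 * z 3 * v 3
    - g * ((m₁ + m₂) * r₁ * Real.sin (z 0) * v 0 + m₂ * r₂ * Real.sin (z 1) * v 1)

theorem hasDerivAt_energy {z : ℝ → Fin 4 → ℝ} {v : Fin 4 → ℝ} {t : ℝ} (hz : HasDerivAt z v t) :
    HasDerivAt (fun s => Tpend m₁ m₂ r₁ r₂ (z s) + Upend m₁ m₂ r₁ r₂ g (z s))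
      (energyRate m₁ m₂ r₁ r₂ g (z t) v) t := by
  have hθ₁ : HasDerivAt (fun s => z s 0) (v 0) t := hasDerivAt_pi.mp hz 0
  have hθ₂ : HasDerivAt (fun s => z s 1) (v 1) t := hasDerivAt_pi.mp hz 1
  have hω₁ : HasDerivAt (fun s => z s 2) (v 2) t := hasDerivAt_pi.mp hz 2
  have hω₂ : HasDerivAt (fun s => z s 3) (v 3) t := hasDerivAt_pi.mp hz 3
  have hT := (((hω₁.pow 2).const_mul ((1 / 2) * (m₁ + m₂) * r₁ ^ 2)).add
    (((hω₁.const_mul (m₂ * r₁ * r₂)).mul hω₂).mul (hθ₁.sub hθ₂).cos)).add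
    ((hω₂.pow 2).const_mul ((1 / 2) * m₂ * r₂ ^ 2))
  have hU := ((hθ₁.cos.const_mul ((m₁ + m₂) * r₁)).add (hθ₂.cos.const_mul (m₂ * r₂))).const_mul g
  refine ((hT.add hU).congr_of_eventuallyEq (.of_forall fun s => ?_)).congr_deriv ?_
  · simp only [Tpend, Upend, Pi.add_apply, Pi.mul_apply, Pi.pow_apply, Pi.sub_apply]
  · simp only [energyRate, Pi.mul_apply, Pi.sub_apply]
    ring

theorem energyRate_fpend (z : Fin 4 → ℝ) (hΔ : Δpend m₁ m₂ r₁ r₂ z ≠ 0) :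
    energyRate m₁ m₂ r₁ r₂ g z (fpend m₁ m₂ r₁ r₂ g z) = 0 := by
  have h₁ := fpend_lagrange_fst (g := g) z hΔ
  have h₂ := fpend_lagrange_snd (g := g) z hΔ
  simp only [fpend, Matrix.cons_val] at h₁ h₂
  simp only [energyRate, fpend, Matrix.cons_val]
  linear_combination z 2 * h₁ + z 3 * h₂

end EnergyConservation

theorem energy_conservation_general
    (m₁ m₂ r₁ r₂ g : ℝ) (hm₁ : 0 < m₁) (hm₂ : 0 < m₂)
    (hr₁ : 0 < r₁) (hr₂ : 0 < r₂)
    (z : ℝ → (Fin 4 → ℝ))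
    (hz : ∀ t : ℝ, HasDerivAt z (fpend m₁ m₂ r₁ r₂ g (z t)) t) :
    ∀ s t : ℝ,
      Tpend m₁ m₂ r₁ r₂ (z s) + Upend m₁ m₂ r₁ r₂ g (z s) =
      Tpend m₁ m₂ r₁ r₂ (z t) + Upend m₁ m₂ r₁ r₂ g (z t) := by
  have hE : ∀ t, HasDerivAt (fun s => Tpend m₁ m₂ r₁ r₂ (z s) + Upend m₁ m₂ r₁ r₂ g (z s)) 0 t :=
    fun t => by
      rw [← energyRate_fpend (g := g) (z t) (Δpend_pos hm₁ hm₂.le hr₁ hr₂ (z t)).ne']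
      exact hasDerivAt_energy (hz t)
  exact is_const_of_deriv_eq_zero (fun t => (hE t).differentiableAt) (fun t => (hE t).deriv)

/-- **Energy conservation for the uncontrolled system.** Along any solution of
`ż = f(z)`, the total energy `T + U` is constant. -/
theorem energy_conservation
    (m₁ m₂ r₁ r₂ g : ℝ) (hm₁ : 0 < m₁) (hm₂ : 0 < m₂)
    (hr₁ : 0 < r₁) (hr₂ : 0 < r₂) (hg : 0 < g)
    (z : ℝ → (Fin 4 → ℝ))
    (hz : ∀ t : ℝ, HasDerivAt z (fpend m₁ m₂ r₁ r₂ g (z t)) t) :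
    ∀ s t : ℝ,
      Tpend m₁ m₂ r₁ r₂ (z s) + Upend m₁ m₂ r₁ r₂ g (z s) =
      Tpend m₁ m₂ r₁ r₂ (z t) + Upend m₁ m₂ r₁ r₂ g (z t) :=
  energy_conservation_general m₁ m₂ r₁ r₂ g hm₁ hm₂ hr₁ hr₂ z hz
end
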